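/- Let θ_1,…,θ_n ∈ (0,π/2) with ∑_{i=1}^n θ_i = π. Then (∑_{i=1}^n tan θ_i)^2 − (n tan(π/n)) (∑_{i=1}^n tan θ_i) ≤ (∑_{i=1}^n tan θ_i)^3 − (n tan(π/n))^3, with equality if and only if θ_1 = ⋯ = θ_n = π/n. -/

import Mathlib

/-!
Write `S = ∑ tan θᵢ` and `T = n tan (π / n)`. Since `tan` is strictly convex on `[0, π/2)`,
Jensen's inequality at the mean `π / n` gives `T ≤ S`, with equality iff all `θᵢ = π / n`.
The claim then follows from
`S³ - T³ - (S² - T S) = (S - T) (S² + S T + T² - S)`, whose second factor is positive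
because `S ≥ T > π > 1`.
-/

open Real Finset

lemma strictConvexOn_tan : StrictConvexOn ℝ (Set.Ico 0 (π / 2)) tan := by
  refine StrictMonoOn.strictConvexOn_of_deriv (convex_Ico _ _) ?_ ?_
  · exact continuousOn_tan.mono fun x hx ↦
      (cos_pos_of_mem_Ioo ⟨by linarith [hx.1, pi_pos], hx.2⟩).ne'
  · rw [interior_Ico]
    intro x hx y hy hxy
    have hcy : 0 < cos y := cos_pos_of_mem_Ioo ⟨by linarith [hy.1, pi_pos], hy.2⟩
    have hcos : cos y < cos x := cos_lt_cos_of_nonneg_of_le_pi_div_two hx.1.le hy.2.le hxy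
    simp only [deriv_tan]
    gcongr

section ArithmeticMean

variable {ι : Type*} [Fintype ι] {s : Set ℝ} {f : ℝ → ℝ} {x : ι → ℝ}

private lemma sum_uniform_smul :
    ∑ i, (Fintype.card ι : ℝ)⁻¹ • x i = (∑ i, x i) / Fintype.card ι := by
  simp [← mul_sum, div_eq_inv_mul]

variable [Nonempty ι]

private lemma sum_uniform_weights : ∑ _i : ι, (Fintype.card ι : ℝ)⁻¹ = 1 := by
  simp [card_univ]

lemma ConvexOn.card_mul_map_mean_le_sum (hf : ConvexOn ℝ s f) (hx : ∀ i, x i ∈ s) :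
    Fintype.card ι * f ((∑ i, x i) / Fintype.card ι) ≤ ∑ i, f (x i) := by
  have h := hf.map_sum_le (t := univ) (fun _ _ ↦ by positivity) sum_uniform_weights
    fun i _ ↦ hx i
  rw [sum_uniform_smul, ← smul_sum, smul_eq_mul] at h
  rwa [le_inv_mul_iff₀ (by positivity)] at h

lemma StrictConvexOn.card_mul_map_mean_eq_sum_iff (hf : StrictConvexOn ℝ s f)
    (hx : ∀ i, x i ∈ s) :
    Fintype.card ι * f ((∑ i, x i) / Fintype.card ι) = ∑ i, f (x i) ↔
      ∀ i, x i = (∑ i, x i) / Fintype.card ι := by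
  have h := hf.map_sum_eq_iff (t := univ) (fun _ _ ↦ by positivity) sum_uniform_weights
    fun i _ ↦ hx i
  rw [sum_uniform_smul, ← smul_sum, smul_eq_mul] at h
  simpa [eq_inv_mul_iff_mul_eq₀ (by positivity : (Fintype.card ι : ℝ) ≠ 0)] using h

end ArithmeticMean

lemma sq_sub_mul_le_cube_sub_cube {S T : ℝ} (hT : 1 ≤ T) (hTS : T ≤ S) :
    S ^ 2 - T * S ≤ S ^ 3 - T ^ 3 ∧ (S ^ 2 - T * S = S ^ 3 - T ^ 3 ↔ T = S) := by
  have hpos : 0 < S ^ 2 + S * T + T ^ 2 - S := by nlinarith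
  have hfactor : S ^ 3 - T ^ 3 - (S ^ 2 - T * S) = (S - T) * (S ^ 2 + S * T + T ^ 2 - S) := by ring
  refine ⟨by nlinarith [mul_nonneg (sub_nonneg.2 hTS) hpos.le], ?_⟩
  rw [eq_comm, ← sub_eq_zero, hfactor, mul_eq_zero, or_iff_left hpos.ne', sub_eq_zero, eq_comm]

open Real in
theorem stmt8 (n : ℕ) (hn : 3 ≤ n)
    (θ : Fin n → ℝ) (hθ : ∀ i, θ i ∈ Set.Ioo (0:ℝ) (π / 2))
    (hsum : ∑ i, θ i = π) :
    (∑ i, tan (θ i)) ^ 2 - ((n : ℝ) * tan (π / n)) * (∑ i, tan (θ i))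
      ≤ (∑ i, tan (θ i)) ^ 3 - ((n : ℝ) * tan (π / n)) ^ 3
    ∧ ((∑ i, tan (θ i)) ^ 2 - ((n : ℝ) * tan (π / n)) * (∑ i, tan (θ i))
        = (∑ i, tan (θ i)) ^ 3 - ((n : ℝ) * tan (π / n)) ^ 3
      ↔ ∀ i, θ i = π / n) := by
  have : Nonempty (Fin n) := ⟨⟨0, by omega⟩⟩
  have hn0 : (0 : ℝ) < n := by positivity
  have hθ' : ∀ i, θ i ∈ Set.Ico 0 (π / 2) := fun i ↦ Set.Ioo_subset_Ico_self (hθ i)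
  have hjensen := strictConvexOn_tan.convexOn.card_mul_map_mean_le_sum hθ'
  have hjensen_eq := strictConvexOn_tan.card_mul_map_mean_eq_sum_iff hθ'
  simp only [Fintype.card_fin, hsum] at hjensen hjensen_eq
  have hpi_lt : π < n * tan (π / n) := by
    have hlt : π / n < π / 2 := by
      rw [div_lt_div_iff₀ hn0 two_pos]
      have : (3 : ℝ) ≤ n := by exact_mod_cast hn
      nlinarith [pi_pos]
    calc π = n * (π / n) := by field_simp
      _ < n * tan (π / n) := by gcongr; exact lt_tan (by positivity) hlt
  rw [← hjensen_eq]
  exact sq_sub_mul_le_cube_sub_cube (by linarith [pi_gt_three]) hjensen
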